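/- The set-indexed process X (having an almost surely unique additive extension to 𝒞(u)) is set-Markov if and only if for all B, B' ∈ 𝒜(u) with B ⊆ B', the σ-fields ℱ_B and σ(X_{B'∖B}) are conditionally independent given σ(X_B), where X_{B'∖B} := X_{B'} − X_B. -/

import Mathlib

open MeasureTheory ProbabilityTheory Set
open scoped ENNReal

noncomputable section

namespace SetIndexedMarkov

variable {T : Type*} [TopologicalSpace T] {Ω : Type*} [mΩ : MeasurableSpace Ω]

/-- `𝒜(u)`: the collection of all finite unions of sets in `𝒜`. -/
def Au (𝒜 : Set (Set T)) : Set (Set T) :=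
  {B | ∃ s : Finset (Set T), ↑s ⊆ 𝒜 ∧ s.Nonempty ∧ B = ⋃₀ ↑s}

/-- `𝒞`: the collection of all sets of the form `A \ B` with `A ∈ 𝒜`, `B ∈ 𝒜(u)`. -/
def CC (𝒜 : Set (Set T)) : Set (Set T) :=
  {C | ∃ A ∈ 𝒜, ∃ B ∈ Au 𝒜, C = A \ B}

/-- `∅' := ⋂ {A ∈ 𝒜 : A ≠ ∅}`, the minimal set of `𝒜`. -/
def emptyPrime (𝒜 : Set (Set T)) : Set T := ⋂₀ {A ∈ 𝒜 | A ≠ ∅}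

/-- The standing structural assumptions on the indexing collection `𝒜`: a semilattice of
closed subsets of the compact Hausdorff space `T`, containing `∅` and `T`, closed under
arbitrary (nonempty) intersections, and containing no two disjoint nonempty sets. -/
structure IsIndexing (𝒜 : Set (Set T)) : Prop where
  closed : ∀ A ∈ 𝒜, IsClosed A
  empty_mem : ∅ ∈ 𝒜
  univ_mem : Set.univ ∈ 𝒜
  sInter_mem : ∀ S ⊆ 𝒜, S.Nonempty → ⋂₀ S ∈ 𝒜
  no_disjoint : ∀ A ∈ 𝒜, ∀ B ∈ 𝒜, A.Nonempty → B.Nonempty → (A ∩ B).Nonempty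

/-- The σ-field generated by a real random variable. -/
def sigOf (f : Ω → ℝ) : MeasurableSpace Ω := MeasurableSpace.comap f inferInstance

/-- The minimal filtration `ℱ_B = σ(X_A : A ∈ 𝒜, A ⊆ B)`. -/
def filt (𝒜 : Set (Set T)) (X : Set T → Ω → ℝ) (B : Set T) : MeasurableSpace Ω :=
  ⨆ A ∈ {A | A ∈ 𝒜 ∧ A ⊆ B}, sigOf (X A)

/-- `G` and `H` are conditionally independent given `K` (under `P`):
`E[1_G 1_H | K] = E[1_G | K] ⬝ E[1_H | K]` a.s. for all `G`-, `H`-measurable sets. -/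
def CondIndepGiven (P : Measure Ω) (G H K : MeasurableSpace Ω) : Prop :=
  ∀ g h : Set Ω, MeasurableSet[G] g → MeasurableSet[H] h →
    (P[((g ∩ h).indicator fun _ => (1 : ℝ)) | K]) =ᵐ[P]
      fun ω => (P[(g.indicator fun _ => (1 : ℝ)) | K]) ω *
        (P[(h.indicator fun _ => (1 : ℝ)) | K]) ω

/-- Every `X_B`, `B ∈ 𝒜(u)`, is a (measurable) random variable. -/
def MeasOnAu (𝒜 : Set (Set T)) (X : Set T → Ω → ℝ) : Prop :=
  ∀ B ∈ Au 𝒜, Measurable (X B)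

/-- The process `X` (viewed on `𝒜(u)`) is almost surely finitely additive, i.e. it is the
(a.s. unique) additive extension of its restriction to `𝒜`: it vanishes a.s. at `∅` and is
a.s. modular on the lattice `𝒜(u)`. -/
def AddExtension (𝒜 : Set (Set T)) (P : Measure Ω) (X : Set T → Ω → ℝ) : Prop :=
  (∀ᵐ ω ∂P, X ∅ ω = 0) ∧
    ∀ B ∈ Au 𝒜, ∀ B' ∈ Au 𝒜,
      ∀ᵐ ω ∂P, X (B ∪ B') ω + X (B ∩ B') ω = X B ω + X B' ω

/-- `X` is set-Markov: for all `A ∈ 𝒜`, `B ∈ 𝒜(u)`, `ℱ_B ⟂ σ(X_{A∖B}) | σ(X_B)`,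
where `X_{A∖B} = X_{A∪B} - X_B`. -/
def SetMarkov (𝒜 : Set (Set T)) (P : Measure Ω) (X : Set T → Ω → ℝ) : Prop :=
  ∀ A ∈ 𝒜, ∀ B ∈ Au 𝒜,
    CondIndepGiven P (filt 𝒜 X B) (sigOf fun ω => X (A ∪ B) ω - X B ω) (sigOf (X B))

/-- A flow: an increasing map `f : [0,a] → 𝒜(u)`. -/
def IsFlow (𝒜 : Set (Set T)) (a : ℝ) (f : ℝ → Set T) : Prop :=
  (∀ t ∈ Set.Icc (0 : ℝ) a, f t ∈ Au 𝒜) ∧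
    ∀ s t : ℝ, 0 ≤ s → s ≤ t → t ≤ a → f s ⊆ f t

/-- A continuous flow. -/
def IsContinuousFlow (𝒜 : Set (Set T)) (a : ℝ) (f : ℝ → Set T) : Prop :=
  IsFlow 𝒜 a f ∧
    (∀ t ∈ Set.Icc (0 : ℝ) a, ∀ u : ℕ → ℝ, (∀ n, u n ∈ Set.Icc t a) → Antitone u →
      Filter.Tendsto u Filter.atTop (nhds t) → f t = ⋂ n, f (u n)) ∧
    (∀ t ∈ Set.Icc (0 : ℝ) a, ∀ u : ℕ → ℝ, (∀ n, u n ∈ Set.Icc 0 t) → Monotone u →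
      Filter.Tendsto u Filter.atTop (nhds t) → f t = closure (⋃ n, f (u n)))

/-- A simple flow: a continuous flow starting at `∅'` which is piecewise `𝒜`-valued. -/
def IsSimpleFlow (𝒜 : Set (Set T)) (a : ℝ) (f : ℝ → Set T) : Prop :=
  IsContinuousFlow 𝒜 a f ∧ f 0 = emptyPrime 𝒜 ∧
    ∃ (n : ℕ) (t : ℕ → ℝ) (g : ℕ → ℝ → Set T),
      0 < n ∧ t 0 = 0 ∧ t n = a ∧ (∀ i < n, t i < t (i + 1)) ∧
      (∀ i < n, ∀ s ∈ Set.Icc (t i) (t (i + 1)), g (i + 1) s ∈ 𝒜) ∧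
      (∀ i < n, ∀ s u : ℝ, t i ≤ s → s ≤ u → u ≤ t (i + 1) → g (i + 1) s ⊆ g (i + 1) u) ∧
      (∀ i < n, ∀ s ∈ Set.Icc (t i) (t (i + 1)),
        f s = (⋃ j ∈ Finset.Icc 1 i, g j (t j)) ∪ g (i + 1) s)

/-- A finite sub-semilattice of `𝒜`: a finite nonempty subfamily closed under intersection. -/
def IsSubSemilattice (𝒜 : Set (Set T)) (L : Finset (Set T)) : Prop :=
  ↑L ⊆ 𝒜 ∧ L.Nonempty ∧ ∀ A ∈ L, ∀ B ∈ L, A ∩ B ∈ L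

/-- A consistent ordering `{A₀ = ∅', A₁, …, Aₙ}` of the finite sub-semilattice `L`. -/
structure ConsistentOrdering (𝒜 : Set (Set T)) (L : Finset (Set T)) (n : ℕ)
    (A : ℕ → Set T) : Prop where
  zero : A 0 = emptyPrime 𝒜
  first : A 1 = ⋂₀ ↑L
  mem : ∀ i, 1 ≤ i → i ≤ n → A i ∈ L
  inj : ∀ i j, 1 ≤ i → i ≤ n → 1 ≤ j → j ≤ n → A i = A j → i = j
  surj : ∀ B ∈ L, ∃ i, 1 ≤ i ∧ i ≤ n ∧ A i = B
  consistent : ∀ i, 1 ≤ i → i ≤ n → ∀ B ∈ L, B ⊆ A i → B ≠ A i → ∃ j < i, A j = B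

/-- `⋃_{j=1}^{i} A_j`. -/
def Uu (A : ℕ → Set T) (i : ℕ) : Set T := ⋃ j ∈ Finset.Icc 1 i, A j

/-- `⋃_{j=0}^{i} A_j`. -/
def U0 (A : ℕ → Set T) (i : ℕ) : Set T := ⋃ j ∈ Finset.range (i + 1), A j

/-- The left neighbourhood `C_j = A_j ∖ ⋃_{l=0}^{j-1} A_l`. -/
def leftNbhd (A : ℕ → Set T) (j : ℕ) : Set T := A j \ ⋃ l ∈ Finset.range j, A l

/-- A (set-indexed) transition system `𝒬 = (Q_{BB'})_{B ⊆ B'}`. -/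
def IsTransitionSystem (𝒜 : Set (Set T)) (Q : Set T → Set T → Kernel ℝ ℝ) : Prop :=
  (∀ B ∈ Au 𝒜, ∀ B' ∈ Au 𝒜, B ⊆ B' → IsMarkovKernel (Q B B')) ∧
    (∀ B ∈ Au 𝒜, ∀ x : ℝ, Q B B x = Measure.dirac x) ∧
    (∀ B ∈ Au 𝒜, ∀ B' ∈ Au 𝒜, ∀ B'' ∈ Au 𝒜, B ⊆ B' → B' ⊆ B'' →
      ∀ (x : ℝ) (Γ : Set ℝ), MeasurableSet Γ →
        Q B B'' x Γ = ∫⁻ y, Q B' B'' y Γ ∂(Q B B' x))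

/-- `X` is `𝒬`-Markov: `P[X_{B'} ∈ Γ | ℱ_B] = Q_{BB'}(X_B; Γ)` a.s. -/
def QMarkov (𝒜 : Set (Set T)) (P : Measure Ω) (X : Set T → Ω → ℝ)
    (Q : Set T → Set T → Kernel ℝ ℝ) : Prop :=
  ∀ B ∈ Au 𝒜, ∀ B' ∈ Au 𝒜, B ⊆ B' → ∀ Γ : Set ℝ, MeasurableSet Γ →
    (P[fun ω => Γ.indicator (fun _ => (1 : ℝ)) (X B' ω) | filt 𝒜 X B]) =ᵐ[P]
      fun ω => (Q B B' (X B ω) Γ).toReal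

/-- Iterated integration of the coordinates `i+1, …, i+m` of a path, each coordinate `j+1`
being integrated with respect to the kernel `κ j` applied at the coordinate `j`. -/
def stepInt (κ : ℕ → Kernel ℝ ℝ) : ℕ → ℕ → ((ℕ → ℝ) → ℝ≥0∞) → (ℕ → ℝ) → ℝ≥0∞
  | _, 0, f, x => f x
  | i, m + 1, f, x =>
      ∫⁻ y, stepInt κ (i + 1) m f (Function.update x (i + 1) y) ∂(κ i (x i))

/-- The iterated integral
`∫ … ∫ f(x₀,…,xₙ) κ_{n-1}(x_{n-1}; dxₙ) ⋯ κ_0(x₀; dx₁) μ(dx₀)`. -/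
def kiter (μ : Measure ℝ) (κ : ℕ → Kernel ℝ ℝ) (n : ℕ) (f : (ℕ → ℝ) → ℝ≥0∞) : ℝ≥0∞ :=
  ∫⁻ x₀, stepInt κ 0 n f (fun _ => x₀) ∂μ

/-- The sequence of kernels `Q_{∅'A₁}, Q_{A₁, A₁∪A₂}, …, Q_{⋃_{j<n}A_j, ⋃_{j≤n}A_j}`
attached to a consistent ordering `A` by a set-indexed transition system `Q`. -/
def kerSeq (Q : Set T → Set T → Kernel ℝ ℝ) (A : ℕ → Set T) (i : ℕ) : Kernel ℝ ℝ :=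
  Q (if i = 0 then A 0 else Uu A i) (Uu A (i + 1))

/-- The integrand `1_{Γ₀}(y₀) 1_{Γ₁}(y₁) ∏_{i=2}^{n} 1_{Γ_i}(y_{π(i)} - y_{π(i)-1})`. -/
def PermIntegrand (Γ : ℕ → Set ℝ) (π : ℕ → ℕ) (n : ℕ) (y : ℕ → ℝ) : ℝ≥0∞ :=
  (Γ 0).indicator 1 (y 0) * (Γ 1).indicator 1 (y 1) *
    ∏ i ∈ Finset.Icc 2 n, (Γ i).indicator 1 (y (π i) - y (π i - 1))

/-- Assumption 1: the finite dimensional distributions built from `𝒬` over the left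
neighbourhoods of a finite sub-semilattice do not depend on the consistent ordering. -/
def Assumption1 (𝒜 : Set (Set T)) (Q : Set T → Set T → Kernel ℝ ℝ) (μ : Measure ℝ) : Prop :=
  ∀ (L : Finset (Set T)) (n : ℕ) (A A' : ℕ → Set T) (π : Equiv.Perm ℕ),
    IsSubSemilattice 𝒜 L → ConsistentOrdering 𝒜 L n A → ConsistentOrdering 𝒜 L n A' →
    π 1 = 1 → (∀ i, ¬(1 ≤ i ∧ i ≤ n) → π i = i) →
    (∀ i, 1 ≤ i → i ≤ n → A i = A' (π i)) →
    ∀ Γ : ℕ → Set ℝ, (∀ i, MeasurableSet (Γ i)) →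
      kiter μ (kerSeq Q A) n (PermIntegrand Γ id n) =
        kiter μ (kerSeq Q A') n (PermIntegrand Γ π n)

/-- `X` has independent increments. -/
def IndepIncrements (𝒜 : Set (Set T)) (P : Measure Ω) (X : Set T → Ω → ℝ) : Prop :=
  ∀ (n : ℕ) (A B : ℕ → Set T),
    (∀ i < n, A i ∈ 𝒜) → (∀ i < n, B i ∈ Au 𝒜) →
    (∀ i < n, ∀ j < n, i ≠ j → Disjoint (A i \ B i) (A j \ B j)) →
    iIndepFun
      (fun i : Fin n => fun ω => X (A i ∪ B i) ω - X (B i) ω) P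

/-- The trace `X^f` of `X` along the flow `f` is Markov with the one-dimensional
transition system `Qf`. -/
def QMarkovFlow (𝒜 : Set (Set T)) (P : Measure Ω) (X : Set T → Ω → ℝ)
    (a : ℝ) (f : ℝ → Set T) (Qf : ℝ → ℝ → Kernel ℝ ℝ) : Prop :=
  ∀ s t : ℝ, 0 ≤ s → s < t → t ≤ a → ∀ Γ : Set ℝ, MeasurableSet Γ →
    (P[fun ω => Γ.indicator (fun _ => (1 : ℝ)) (X (f t) ω) | filt 𝒜 X (f s)]) =ᵐ[P]
      fun ω => (Qf s t (X (f s) ω) Γ).toReal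

/-- A one-dimensional transition system on the time interval `[0,a]`. -/
def IsFlowTransition (a : ℝ) (Q : ℝ → ℝ → Kernel ℝ ℝ) : Prop :=
  (∀ s t : ℝ, 0 ≤ s → s < t → t ≤ a → IsMarkovKernel (Q s t)) ∧
    ∀ s t u : ℝ, 0 ≤ s → s < t → t < u → u ≤ a →
      ∀ (x : ℝ) (Γ : Set ℝ), MeasurableSet Γ →
        Q s u x Γ = ∫⁻ y, Q t u y Γ ∂(Q s t x)

/-- The simple flow `f` connects the sets of a finite sub-semilattice in the sense of the
consistent ordering `A`, with partition `t` of `[0,a]`. -/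
def Connects (𝒜 : Set (Set T)) (n : ℕ) (A : ℕ → Set T) (a : ℝ) (t : ℕ → ℝ)
    (f : ℝ → Set T) : Prop :=
  t 0 = 0 ∧ t n = a ∧ (∀ i < n, t i < t (i + 1)) ∧
    (∀ i ≤ n, f (t i) = Uu A i) ∧
    ∃ g : ℕ → ℝ → Set T,
      (∀ i < n, ∀ s ∈ Set.Icc (t i) (t (i + 1)), g (i + 1) s ∈ 𝒜) ∧
      (∀ i < n, ∀ s u : ℝ, t i ≤ s → s ≤ u → u ≤ t (i + 1) → g (i + 1) s ⊆ g (i + 1) u) ∧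
      (∀ i < n, g (i + 1) (t i) = A i ∧ g (i + 1) (t (i + 1)) = A (i + 1)) ∧
      (∀ i < n, ∀ s ∈ Set.Icc (t i) (t (i + 1)),
        f s = (⋃ j ∈ Finset.Icc 1 i, A j) ∪ g (i + 1) s)

/-- `ℱ_{∂B} = σ(X_A : A ∈ 𝒜, A ⊆ B, A ⊄ B°)`. -/
def filtBoundary (𝒜 : Set (Set T)) (X : Set T → Ω → ℝ) (B : Set T) : MeasurableSpace Ω :=
  ⨆ A ∈ {A | A ∈ 𝒜 ∧ A ⊆ B ∧ ¬ A ⊆ interior B}, sigOf (X A)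

/-- `ℱ_{B^c} = σ(X_A : A ∈ 𝒜, A ⊄ B)`. -/
def filtComp (𝒜 : Set (Set T)) (X : Set T → Ω → ℝ) (B : Set T) : MeasurableSpace Ω :=
  ⨆ A ∈ {A | A ∈ 𝒜 ∧ ¬ A ⊆ B}, sigOf (X A)

/-- The initial distribution of `X`: the law of `X_{∅'}`. -/
def InitialLaw (P : Measure Ω) (X : Set T → Ω → ℝ) (𝒜 : Set (Set T)) : Measure ℝ :=
  P.map (X (emptyPrime 𝒜))

/-- The measure `Q_{BB'}(x; ·) = F_{B'∖B}(· - x)`, i.e. the law of `X_{B'} - X_B + x`. -/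
def incLaw (P : Measure Ω) (X : Set T → Ω → ℝ) (B B' : Set T) (x : ℝ) : Measure ℝ :=
  P.map fun ω => X B' ω - X B ω + x

/-!
Write `B' = B ∪ A₁ ∪ ⋯ ∪ Aₙ` with `Aᵢ ∈ 𝒜`, and `B₀ = B`, `Bᵢ = Aᵢ ∪ Bᵢ₋₁`. Going backwards from
`i = n` we show `ℱ_{Bᵢ} ⊥ X_{B'} | X_{Bᵢ}`. The step from `i` to `i - 1` is a Markov-chain argument:
the set-Markov property at `(Aᵢ, Bᵢ₋₁)` gives `ℱ_{Bᵢ₋₁} ⊥ X_{Bᵢ} | X_{Bᵢ₋₁}`, and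
`ℱ_{Bᵢ₋₁} ∨ σ(X_{Bᵢ₋₁})` lies in `ℱ_{Bᵢ}` up to null sets, because inclusion–exclusion expresses
`X_{Bᵢ₋₁}` a.s. through the `X_A` with `A ∈ 𝒜`, `A ⊆ Bᵢ₋₁`. At `i = 0` this gives
`ℱ_B ⊥ σ(X_B, X_{B'}) | X_B`, and `X_{B'} - X_B` is `σ(X_B, X_{B'})`-measurable. The converse is the
case `B' = A ∪ B`.

Conditional independence `G ⊥ H | K` is used in two equivalent forms:
`∫_k P(g | K) P(h | K) = P(k ∩ g ∩ h)` for all `k ∈ K`, and `P(h | G ∨ K) = P(h | K)`.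
-/

section CondExp

variable {α : Type*} {m K : MeasurableSpace α} [mα : MeasurableSpace α] {μ : Measure α}

lemma norm_condExp_indicator_le_one (s : Set α) : ∀ᵐ ω ∂μ, ‖(μ⟦s | m⟧) ω‖ ≤ 1 :=
  ae_bdd_norm_condExp_of_ae_bdd_norm <| .of_forall fun ω =>
    (norm_indicator_le_norm_self _ ω).trans norm_one.le

lemma setIntegral_indicator_one (s : Set α) {t : Set α} (ht : MeasurableSet t) :
    ∫ ω in s, t.indicator (fun _ => (1 : ℝ)) ω ∂μ = μ.real (s ∩ t) := by
  rw [setIntegral_indicator ht, setIntegral_const, smul_eq_mul, mul_one]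

lemma setIntegral_eq_of_forall_inter {m₁ m₂ : MeasurableSpace α} (hm₁ : m₁ ≤ mα)
    (hm₂ : m₂ ≤ mα) {f g : α → ℝ} (hf : Integrable f μ) (hg : Integrable g μ)
    (hfg : ∀ s t, MeasurableSet[m₁] s → MeasurableSet[m₂] t →
      ∫ ω in s ∩ t, f ω ∂μ = ∫ ω in s ∩ t, g ω ∂μ)
    {u : Set α} (hu : MeasurableSet[m₁ ⊔ m₂] u) :
    ∫ ω in u, f ω ∂μ = ∫ ω in u, g ω ∂μ := by
  set p := image2 (· ∩ ·) {s | MeasurableSet[m₁] s} {t | MeasurableSet[m₂] t}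
  have hp : IsPiSystem p := by
    rintro _ ⟨s, hs, t, ht, rfl⟩ _ ⟨s', hs', t', ht', rfl⟩ -
    exact ⟨s ∩ s', hs.inter hs', t ∩ t', ht.inter ht', by rw [inter_inter_inter_comm]⟩
  have hgen : m₁ ⊔ m₂ = MeasurableSpace.generateFrom p := by
    refine le_antisymm (sup_le (fun s hs => ?_) (fun t ht => ?_)) ?_
    · exact .basic _ ⟨s, hs, univ, .univ, inter_univ s⟩
    · exact .basic _ ⟨univ, .univ, t, ht, univ_inter t⟩
    · refine MeasurableSpace.generateFrom_le ?_
      rintro _ ⟨s, hs, t, ht, rfl⟩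
      exact (le_sup_left (a := m₁) s hs).inter (le_sup_right (a := m₁) t ht)
  have hle : m₁ ⊔ m₂ ≤ mα := sup_le hm₁ hm₂
  induction u, hu using MeasurableSpace.induction_on_inter hgen hp with
  | empty => simp
  | basic _ hu =>
    obtain ⟨s, hs, t, ht, rfl⟩ := hu
    exact hfg s t hs ht
  | compl t htm ht =>
    have huniv := hfg univ univ .univ .univ
    rw [inter_univ, setIntegral_univ, setIntegral_univ] at huniv
    rw [setIntegral_compl (hle t htm) hf, setIntegral_compl (hle t htm) hg, ht, huniv]
  | iUnion t hdisj htm ht =>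
    rw [integral_iUnion (fun i => hle _ (htm i)) hdisj hf.integrableOn,
      integral_iUnion (fun i => hle _ (htm i)) hdisj hg.integrableOn]
    exact tsum_congr ht

variable [IsFiniteMeasure μ]

lemma setIntegral_mul_condExp (hm : m ≤ mα) {s : Set α} (hs : MeasurableSet[m] s)
    {f ψ : α → ℝ} (hf : Integrable f μ) (hψ : StronglyMeasurable[m] ψ) {C : ℝ}
    (hψC : ∀ᵐ ω ∂μ, ‖ψ ω‖ ≤ C) :
    ∫ ω in s, f ω * ψ ω ∂μ = ∫ ω in s, μ[f | m] ω * ψ ω ∂μ := by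
  have hfψ : Integrable (f * ψ) μ := hf.mul_bdd (hψ.mono hm).aestronglyMeasurable hψC
  calc ∫ ω in s, (f * ψ) ω ∂μ = ∫ ω in s, μ[f * ψ | m] ω ∂μ :=
        (setIntegral_condExp hm hfψ hs).symm
    _ = _ := integral_congr_ae <| ae_restrict_of_ae <|
        condExp_mul_of_stronglyMeasurable_right hψ hfψ hf

lemma setIntegral_indicator_eq_condExp_mul (hm : m ≤ mα) {s t : Set α}
    (hs : MeasurableSet[m] s) (ht : MeasurableSet t) {ψ : α → ℝ}
    (hψ : StronglyMeasurable[m] ψ) {C : ℝ} (hψC : ∀ᵐ ω ∂μ, ‖ψ ω‖ ≤ C) :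
    ∫ ω in s, t.indicator ψ ω ∂μ = ∫ ω in s, (μ⟦t | m⟧) ω * ψ ω ∂μ := by
  rw [← setIntegral_mul_condExp hm hs ((integrable_const 1).indicator ht) hψ hψC]
  congr 1
  funext ω
  by_cases hω : ω ∈ t <;> simp [hω]

lemma condExp_inter_ae_eq_mul_iff (hK : K ≤ mα) {g h : Set α} (hg : MeasurableSet g)
    (hh : MeasurableSet h) :
    μ⟦g ∩ h | K⟧ =ᵐ[μ] (fun ω => (μ⟦g | K⟧) ω * (μ⟦h | K⟧) ω) ↔
      ∀ k, MeasurableSet[K] k →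
        ∫ ω in k, (μ⟦g | K⟧) ω * (μ⟦h | K⟧) ω ∂μ = μ.real (k ∩ (g ∩ h)) := by
  have hint : Integrable (fun ω => (μ⟦g | K⟧) ω * (μ⟦h | K⟧) ω) μ :=
    integrable_condExp.mul_bdd (stronglyMeasurable_condExp.mono hK).aestronglyMeasurable
      (norm_condExp_indicator_le_one h)
  have hcond : ∀ k, MeasurableSet[K] k → ∫ ω in k, (μ⟦g ∩ h | K⟧) ω ∂μ = μ.real (k ∩ (g ∩ h)) :=
    fun k hk => by
      rw [setIntegral_condExp hK ((integrable_const 1).indicator (hg.inter hh)) hk,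
        setIntegral_indicator_one k (hg.inter hh)]
  constructor
  · intro hae k hk
    rw [← hcond k hk]
    exact (integral_congr_ae (ae_restrict_of_ae hae)).symm
  · intro hJ
    refine ae_eq_of_forall_setIntegral_eq_of_sigmaFinite' hK
      (fun _ _ _ => integrable_condExp.integrableOn) (fun _ _ _ => hint.integrableOn)
      (fun k hk _ => by rw [hcond k hk, hJ k hk]) stronglyMeasurable_condExp.aestronglyMeasurable ?_
    exact (stronglyMeasurable_condExp.mul stronglyMeasurable_condExp).aestronglyMeasurable

end CondExp

section CondIndepGiven

variable {α : Type*} {G H H' K : MeasurableSpace α} [mα : MeasurableSpace α]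
  {μ : Measure α}

lemma CondIndepGiven.symm (hind : CondIndepGiven μ G H K) : CondIndepGiven μ H G K :=
  fun h g hh hg => by
    simpa only [inter_comm, mul_comm] using hind g h hg hh

lemma CondIndepGiven.mono_right (hind : CondIndepGiven μ G H K) (hH' : H' ≤ H) :
    CondIndepGiven μ G H' K :=
  fun g h hg hh => hind g h hg (hH' h hh)

variable [IsFiniteMeasure μ]

lemma CondIndepGiven.condExp_sup_ae_eq (hG : G ≤ mα) (hH : H ≤ mα) (hK : K ≤ mα)
    (hind : CondIndepGiven μ G H K) {h : Set α} (hh : MeasurableSet[H] h) :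
    μ⟦h | G ⊔ K⟧ =ᵐ[μ] μ⟦h | K⟧ := by
  have hint : Integrable (h.indicator fun _ => (1 : ℝ)) μ :=
    (integrable_const 1).indicator (hH h hh)
  refine (ae_eq_condExp_of_forall_setIntegral_eq (sup_le hG hK) hint
    (fun _ _ _ => integrable_condExp.integrableOn) (fun s hs _ => ?_)
    (stronglyMeasurable_condExp.mono (le_sup_right : K ≤ G ⊔ K)).aestronglyMeasurable).symm
  refine setIntegral_eq_of_forall_inter hG hK integrable_condExp hint (fun g k hg hk => ?_) hs
  have hJ := (condExp_inter_ae_eq_mul_iff hK (hG g hg) (hH h hh)).1 (hind g h hg hh) k hk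
  rw [inter_comm, ← setIntegral_indicator (hG g hg),
    setIntegral_indicator_eq_condExp_mul hK hk (hG g hg) stronglyMeasurable_condExp
      (norm_condExp_indicator_le_one h), hJ, setIntegral_indicator_one _ (hH h hh), inter_assoc]

lemma condIndepGiven_self (hG : G ≤ mα) (hK : K ≤ mα) : CondIndepGiven μ G K K := by
  intro g k hg hk
  have hind : μ⟦k | K⟧ = k.indicator fun _ => (1 : ℝ) :=
    condExp_of_stronglyMeasurable hK (stronglyMeasurable_const.indicator hk)
      ((integrable_const 1).indicator (hK k hk))
  rw [inter_comm, ← indicator_indicator, hind]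
  filter_upwards [condExp_indicator (m := K) ((integrable_const (1 : ℝ)).indicator (hG g hg)) hk]
    with ω hω
  rw [hω]
  by_cases hωk : ω ∈ k <;> simp [hωk]

lemma CondIndepGiven.sup_right (hG : G ≤ mα) (hH : H ≤ mα) (hK : K ≤ mα)
    (hind : CondIndepGiven μ G H K) : CondIndepGiven μ G (K ⊔ H) K := by
  intro g h hg hh
  have hgm := hG g hg
  refine (condExp_inter_ae_eq_mul_iff hK hgm (sup_le hK hH h hh)).2 fun k hk => ?_
  have hkm := hK k hk
  have hmul : ∀ t, MeasurableSet t → ∫ ω in k, (μ⟦g | K⟧) ω * (μ⟦t | K⟧) ω ∂μ =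
      ∫ ω in t, k.indicator (μ⟦g | K⟧) ω ∂μ := fun t ht => by
    rw [setIntegral_indicator hkm, inter_comm, ← setIntegral_indicator ht,
      setIntegral_indicator_eq_condExp_mul hK hk ht stronglyMeasurable_condExp
        (norm_condExp_indicator_le_one g)]
    simp_rw [mul_comm]
  have hreal : ∀ t, MeasurableSet t → μ.real (k ∩ (g ∩ t)) =
      ∫ ω in t, (k ∩ g).indicator (fun _ => (1 : ℝ)) ω ∂μ := fun t ht => by
    rw [setIntegral_indicator_one _ (hkm.inter hgm), inter_comm t, inter_assoc]
  rw [hmul h (sup_le hK hH h hh), hreal h (sup_le hK hH h hh)]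
  refine setIntegral_eq_of_forall_inter hK hH (integrable_condExp.indicator hkm)
    ((integrable_const 1).indicator (hkm.inter hgm)) (fun k₀ h₁ hk₀ hh₁ => ?_) hh
  have hk₀m := hK k₀ hk₀
  have hh₁m := hH h₁ hh₁
  rw [← hmul _ (hk₀m.inter hh₁m), ← hreal _ (hk₀m.inter hh₁m)]
  have hpull : μ⟦k₀ ∩ h₁ | K⟧ =ᵐ[μ] k₀.indicator (μ⟦h₁ | K⟧) := by
    rw [← indicator_indicator]
    exact condExp_indicator ((integrable_const 1).indicator hh₁m) hk₀
  calc ∫ ω in k, (μ⟦g | K⟧) ω * (μ⟦k₀ ∩ h₁ | K⟧) ω ∂μ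
      = ∫ ω in k, k₀.indicator (fun ω => (μ⟦g | K⟧) ω * (μ⟦h₁ | K⟧) ω) ω ∂μ := by
        refine integral_congr_ae (ae_restrict_of_ae ?_)
        filter_upwards [hpull] with ω hω
        rw [hω]
        by_cases hωk₀ : ω ∈ k₀ <;> simp [hωk₀]
    _ = μ.real ((k ∩ k₀) ∩ (g ∩ h₁)) := by
        rw [setIntegral_indicator hk₀m]
        exact (condExp_inter_ae_eq_mul_iff hK hgm hh₁m).1 (hind g h₁ hg hh₁) _ (hk.inter hk₀)
    _ = μ.real (k ∩ (g ∩ (k₀ ∩ h₁))) := by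
        congr 1
        ext ω
        simp only [mem_inter_iff]
        tauto

end CondIndepGiven

section AeClose

variable {α : Type*} {m m₀ m' : MeasurableSpace α} [mα : MeasurableSpace α] {μ : Measure α}

def aeClose (μ : Measure α) (m : MeasurableSpace α) : MeasurableSpace α where
  MeasurableSet' s := ∃ t, MeasurableSet[m] t ∧ s =ᵐ[μ] t
  measurableSet_empty := ⟨∅, .empty, .rfl⟩
  measurableSet_compl _ := fun ⟨t, ht, hst⟩ => ⟨tᶜ, ht.compl, hst.compl⟩
  measurableSet_iUnion s hs := by
    choose t ht hst using hs
    exact ⟨⋃ n, t n, .iUnion ht, Filter.EventuallyEq.countable_iUnion hst⟩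

lemma le_aeClose : m ≤ aeClose μ m :=
  fun s hs => ⟨s, hs, .rfl⟩

lemma comap_le_aeClose {f g : α → ℝ} (hfg : f =ᵐ[μ] g) (hg : Measurable[m] g) :
    MeasurableSpace.comap f inferInstance ≤ aeClose μ m := by
  rintro _ ⟨Γ, hΓ, rfl⟩
  exact ⟨g ⁻¹' Γ, hg hΓ, hfg.preimage Γ⟩

lemma condExp_ae_eq_of_le_of_le_aeClose [IsFiniteMeasure μ] (hm : m ≤ mα) (hm₀ : m₀ ≤ m')
    (hm' : m' ≤ mα) (hle : m' ≤ aeClose μ m) {f : α → ℝ} (hf : Integrable f μ)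
    (hfm : μ[f | m] =ᵐ[μ] μ[f | m₀]) :
    μ[f | m'] =ᵐ[μ] μ[f | m₀] := by
  refine (ae_eq_condExp_of_forall_setIntegral_eq hm' hf
    (fun _ _ _ => integrable_condExp.integrableOn) (fun s hs _ => ?_)
    (stronglyMeasurable_condExp.mono hm₀).aestronglyMeasurable).symm
  obtain ⟨t, ht, hst⟩ := hle s hs
  rw [setIntegral_congr_set hst, setIntegral_congr_set hst, ← setIntegral_condExp hm hf ht]
  exact integral_congr_ae (ae_restrict_of_ae hfm.symm)

end AeClose

section Chain

variable {α : Type*} {F F₁ H K K₁ : MeasurableSpace α} [mα : MeasurableSpace α]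
  {μ : Measure α} [IsFiniteMeasure μ]

/-- With `φ = P(h | K₁)`, both `∫_k P(g | K) P(h | K)` and `P(k ∩ g ∩ h)` reduce to
`∫_k P(g | K ⊔ K₁) φ`: the first through `P(h | K) = E[φ | K]` and `P(g | K ⊔ K₁) = P(g | K)`,
the second because `φ` is also `P(h | F ⊔ K ⊔ K₁)`. -/
lemma CondIndepGiven.chain (hF : F ≤ mα) (hK : K ≤ mα) (hF₁ : F₁ ≤ mα) (hK₁ : K₁ ≤ mα)
    (hH : H ≤ mα) (hsub : F ⊔ K ≤ aeClose μ (F₁ ⊔ K₁))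
    (h₀ : CondIndepGiven μ F (K ⊔ K₁) K) (h₁ : CondIndepGiven μ F₁ H K₁) :
    CondIndepGiven μ F H K := by
  intro g h hg hh
  have hgm := hF g hg
  have hhm := hH h hh
  refine (condExp_inter_ae_eq_mul_iff hK hgm hhm).2 fun k hk => ?_
  have hKK₁ : K ⊔ K₁ ≤ mα := sup_le hK hK₁
  have hint : Integrable (h.indicator fun _ => (1 : ℝ)) μ := (integrable_const 1).indicator hhm
  have hlast := h₁.condExp_sup_ae_eq hF₁ hH hK₁ hh
  have hFKK₁ : F ⊔ K ⊔ K₁ ≤ aeClose μ (F₁ ⊔ K₁) := sup_le hsub (le_sup_right.trans le_aeClose)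
  have hφ : μ⟦h | F ⊔ K ⊔ K₁⟧ =ᵐ[μ] μ⟦h | K₁⟧ :=
    condExp_ae_eq_of_le_of_le_aeClose (sup_le hF₁ hK₁) le_sup_right (sup_le (sup_le hF hK) hK₁)
      hFKK₁ hint hlast
  have hφ' : μ⟦h | K ⊔ K₁⟧ =ᵐ[μ] μ⟦h | K₁⟧ :=
    condExp_ae_eq_of_le_of_le_aeClose (sup_le hF₁ hK₁) le_sup_right hKK₁
      ((sup_le (le_sup_right.trans le_sup_left) le_sup_right).trans hFKK₁) hint hlast
  have hφK : μ[μ⟦h | K₁⟧ | K] =ᵐ[μ] μ⟦h | K⟧ :=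
    (condExp_congr_ae hφ').symm.trans (condExp_condExp_of_le le_sup_left hKK₁)
  have hgK : μ⟦g | K ⊔ K₁⟧ =ᵐ[μ] μ⟦g | K⟧ := by
    have := h₀.symm.condExp_sup_ae_eq hKK₁ hF hK hg
    rwa [sup_right_comm, sup_idem] at this
  have hmeasφ : StronglyMeasurable[K ⊔ K₁] (μ⟦h | K₁⟧) :=
    stronglyMeasurable_condExp.mono le_sup_right
  calc ∫ ω in k, (μ⟦g | K⟧) ω * (μ⟦h | K⟧) ω ∂μ
      = ∫ ω in k, (μ[μ⟦h | K₁⟧ | K]) ω * (μ⟦g | K⟧) ω ∂μ := by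
        refine integral_congr_ae (ae_restrict_of_ae ?_)
        filter_upwards [hφK] with ω hω
        rw [hω, mul_comm]
    _ = ∫ ω in k, (μ⟦g | K ⊔ K₁⟧) ω * (μ⟦h | K₁⟧) ω ∂μ := by
        rw [← setIntegral_mul_condExp hK hk integrable_condExp stronglyMeasurable_condExp
          (norm_condExp_indicator_le_one g)]
        refine integral_congr_ae (ae_restrict_of_ae ?_)
        filter_upwards [hgK] with ω hω
        rw [hω, mul_comm]
    _ = ∫ ω in k, g.indicator (μ⟦h | F ⊔ K ⊔ K₁⟧) ω ∂μ := by
        rw [← setIntegral_indicator_eq_condExp_mul hKK₁ (le_sup_left (b := K₁) k hk) hgm hmeasφ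
          (norm_condExp_indicator_le_one h)]
        refine integral_congr_ae (ae_restrict_of_ae ?_)
        filter_upwards [hφ] with ω hω
        by_cases hωg : ω ∈ g <;> simp [hωg, hω]
    _ = μ.real (k ∩ (g ∩ h)) := by
        rw [setIntegral_indicator hgm, setIntegral_condExp (sup_le (sup_le hF hK) hK₁) hint
          ((le_sup_right.trans le_sup_left : K ≤ F ⊔ K ⊔ K₁) k hk |>.inter
            ((le_sup_left.trans le_sup_left : F ≤ F ⊔ K ⊔ K₁) g hg)),
          setIntegral_indicator_one _ hhm, inter_assoc]

end Chain

section Indexing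

variable {T Ω : Type*} {𝒜 : Set (Set T)} {X : Set T → Ω → ℝ} {A B : Set T}

lemma IsIndexing.inter_mem [TopologicalSpace T] (h𝒜 : IsIndexing 𝒜) (hA : A ∈ 𝒜) (hB : B ∈ 𝒜) :
    A ∩ B ∈ 𝒜 := by
  rw [← sInter_pair]
  exact h𝒜.sInter_mem _ (pair_subset hA hB) (insert_nonempty _ _)

lemma mem_Au_of_mem (hA : A ∈ 𝒜) : A ∈ Au 𝒜 :=
  ⟨{A}, by simpa using hA, Finset.singleton_nonempty A, by simp⟩

lemma union_mem_Au (hA : A ∈ 𝒜) (hB : B ∈ Au 𝒜) : A ∪ B ∈ Au 𝒜 := by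
  classical
  obtain ⟨s, hs, -, rfl⟩ := hB
  refine ⟨insert A s, ?_, Finset.insert_nonempty A s, ?_⟩
  · rw [Finset.coe_insert]
    exact insert_subset hA hs
  · rw [Finset.coe_insert, sUnion_insert]

lemma union_sUnion_mem_Au {s : Finset (Set T)} (hB : B ∈ Au 𝒜) (hs : ↑s ⊆ 𝒜) :
    B ∪ ⋃₀ ↑s ∈ Au 𝒜 := by
  classical
  obtain ⟨t, ht, htne, rfl⟩ := hB
  exact ⟨t ∪ s, by simp [ht, hs], htne.mono Finset.subset_union_left, by simp [sUnion_union]⟩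

lemma IsIndexing.biUnion_mem_Au [TopologicalSpace T] (h𝒜 : IsIndexing 𝒜) {f : Set T → Set T}
    {s : Finset (Set T)} (hf : ∀ C ∈ s, f C ∈ 𝒜) : ⋃ C ∈ s, f C ∈ Au 𝒜 := by
  classical
  induction s using Finset.induction_on with
  | empty => simpa using mem_Au_of_mem h𝒜.empty_mem
  | insert A s _ ih =>
    rw [Finset.set_biUnion_insert]
    exact union_mem_Au (hf A (Finset.mem_insert_self A s))
      (ih fun C hC => hf C (Finset.mem_insert_of_mem hC))

lemma le_filt (hA : A ∈ 𝒜) (hAB : A ⊆ B) : sigOf (X A) ≤ filt 𝒜 X B :=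
  le_iSup₂ (f := fun A (_ : A ∈ {A | A ∈ 𝒜 ∧ A ⊆ B}) => sigOf (X A)) A ⟨hA, hAB⟩

lemma filt_mono (h : A ⊆ B) : filt 𝒜 X A ≤ filt 𝒜 X B :=
  biSup_mono fun _ hC => ⟨hC.1, hC.2.trans h⟩

lemma sigOf_le_sup_sigOf_sub (f g : Ω → ℝ) :
    sigOf f ≤ sigOf g ⊔ sigOf (fun ω => f ω - g ω) := by
  have h : Measurable[sigOf g ⊔ sigOf (fun ω => f ω - g ω)] (fun ω => g ω + (f ω - g ω)) :=
    ((comap_measurable g).mono le_sup_left le_rfl).add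
      ((comap_measurable (fun ω => f ω - g ω)).mono le_sup_right le_rfl)
  simp only [add_sub_cancel] at h
  exact h.comap_le

lemma sigOf_sub_le_sup (f g : Ω → ℝ) :
    sigOf (fun ω => f ω - g ω) ≤ sigOf g ⊔ sigOf f :=
  (((comap_measurable f).mono le_sup_right le_rfl).sub
    ((comap_measurable g).mono le_sup_left le_rfl)).comap_le

variable [mΩ : MeasurableSpace Ω]

lemma sigOf_le {f : Ω → ℝ} (hf : Measurable f) : sigOf f ≤ mΩ :=
  hf.comap_le

lemma filt_le (hmeas : MeasOnAu 𝒜 X) : filt 𝒜 X B ≤ mΩ :=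
  iSup₂_le fun _ hA => sigOf_le (hmeas _ (mem_Au_of_mem hA.1))

lemma exists_measurable_filt_ae_eq [TopologicalSpace T] {P : Measure Ω} (h𝒜 : IsIndexing 𝒜)
    (hadd : AddExtension 𝒜 P X) (hB : B ∈ Au 𝒜) :
    ∃ Y, Measurable[filt 𝒜 X B] Y ∧ X B =ᵐ[P] Y := by
  classical
  obtain ⟨s, hs, -, rfl⟩ := hB
  -- generalized over `D`: inclusion–exclusion for `insert A s` needs the claim for `s` at both
  -- `D` and `D ∩ A`
  suffices key : ∀ D ∈ 𝒜, ∃ Y, Measurable[filt 𝒜 X (⋃ C ∈ s, D ∩ C)] Y ∧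
      X (⋃ C ∈ s, D ∩ C) =ᵐ[P] Y by
    have heq : ⋃ C ∈ s, univ ∩ C = ⋃₀ ↑s := by simp [sUnion_eq_biUnion]
    have h := key univ h𝒜.univ_mem
    rwa [heq] at h
  induction s using Finset.induction_on with
  | empty => exact fun _ _ => by simpa using ⟨0, measurable_const, hadd.1⟩
  | insert A s _ ih =>
    intro D hD
    have hA : A ∈ 𝒜 := hs (Finset.mem_insert_self A s)
    have hs' : (↑s : Set (Set T)) ⊆ 𝒜 := (Finset.coe_subset.2 (Finset.subset_insert A s)).trans hs
    have hDA := h𝒜.inter_mem hD hA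
    set U := ⋃ C ∈ s, D ∩ C
    have hU : U ∈ Au 𝒜 := h𝒜.biUnion_mem_Au fun C hC => h𝒜.inter_mem hD (hs' hC)
    obtain ⟨Y₁, hY₁, hXY₁⟩ := ih hs' D hD
    obtain ⟨Y₂, hY₂, hXY₂⟩ := ih hs' (D ∩ A) hDA
    have hinter : ⋃ C ∈ s, D ∩ A ∩ C = D ∩ A ∩ U := by
      simp only [U, inter_iUnion₂]
      refine iUnion₂_congr fun C _ => ?_
      rw [inter_assoc, inter_assoc, inter_left_comm A, ← inter_assoc D D, inter_self]
    rw [hinter] at hY₂ hXY₂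
    rw [Finset.set_biUnion_insert]
    refine ⟨fun ω => X (D ∩ A) ω + Y₁ ω - Y₂ ω, ?_, ?_⟩
    · exact (((comap_measurable (X (D ∩ A))).mono (le_filt hDA subset_union_left) le_rfl).add
        (hY₁.mono (filt_mono subset_union_right) le_rfl)).sub
        (hY₂.mono (filt_mono (inter_subset_left.trans subset_union_left)) le_rfl)
    · filter_upwards [hadd.2 _ (mem_Au_of_mem hDA) _ hU, hXY₁, hXY₂] with ω hmod h₁ h₂
      linarith

variable {P : Measure Ω} [IsProbabilityMeasure P]

lemma SetMarkov.condIndepGiven_union (hmeas : MeasOnAu 𝒜 X) (hSM : SetMarkov 𝒜 P X)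
    (hA : A ∈ 𝒜) (hB : B ∈ Au 𝒜) :
    CondIndepGiven P (filt 𝒜 X B) (sigOf (X B) ⊔ sigOf (X (A ∪ B))) (sigOf (X B)) :=
  ((hSM A hA B hB).sup_right (filt_le hmeas)
    (sigOf_le ((hmeas _ (union_mem_Au hA hB)).sub (hmeas B hB)))
    (sigOf_le (hmeas B hB))).mono_right (sup_le le_sup_left (sigOf_le_sup_sigOf_sub _ _))

lemma SetMarkov.condIndepGiven_union_sUnion [TopologicalSpace T] (h𝒜 : IsIndexing 𝒜)
    (hmeas : MeasOnAu 𝒜 X) (hadd : AddExtension 𝒜 P X) (hSM : SetMarkov 𝒜 P X)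
    {s : Finset (Set T)} (hs : ↑s ⊆ 𝒜) (hB : B ∈ Au 𝒜) :
    CondIndepGiven P (filt 𝒜 X B) (sigOf (X (B ∪ ⋃₀ ↑s))) (sigOf (X B)) := by
  classical
  induction s using Finset.induction_on generalizing B with
  | empty =>
    simpa using condIndepGiven_self (μ := P) (filt_le hmeas) (sigOf_le (hmeas B hB))
  | insert A s _ ih =>
    have hA : A ∈ 𝒜 := hs (Finset.mem_insert_self A s)
    have hs' : (↑s : Set (Set T)) ⊆ 𝒜 := (Finset.coe_subset.2 (Finset.subset_insert A s)).trans hs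
    have hAB := union_mem_Au hA hB
    obtain ⟨Y, hYm, hXY⟩ := exists_measurable_filt_ae_eq h𝒜 hadd hB
    have hsub : filt 𝒜 X B ⊔ sigOf (X B) ≤
        aeClose P (filt 𝒜 X (A ∪ B) ⊔ sigOf (X (A ∪ B))) :=
      sup_le ((filt_mono subset_union_right).trans (le_sup_left.trans le_aeClose))
        (comap_le_aeClose hXY (hYm.mono ((filt_mono subset_union_right).trans le_sup_left) le_rfl))
    rw [Finset.coe_insert, sUnion_insert, union_left_comm, ← union_assoc]
    exact (hSM.condIndepGiven_union hmeas hA hB).chain (filt_le hmeas) (sigOf_le (hmeas B hB))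
      (filt_le hmeas) (sigOf_le (hmeas _ hAB)) (sigOf_le (hmeas _ (union_sUnion_mem_Au hAB hs')))
      hsub (ih hs' hAB)

end Indexing

theorem statement4_general {T : Type*} [TopologicalSpace T]
    {Ω : Type*} [mΩ : MeasurableSpace Ω] (P : Measure Ω) [IsProbabilityMeasure P]
    (𝒜 : Set (Set T)) (h𝒜 : IsIndexing 𝒜)
    (X : Set T → Ω → ℝ) (hmeas : MeasOnAu 𝒜 X) (hadd : AddExtension 𝒜 P X) :
    SetMarkov 𝒜 P X ↔
      ∀ B ∈ Au 𝒜, ∀ B' ∈ Au 𝒜, B ⊆ B' →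
        CondIndepGiven P (filt 𝒜 X B)
          (sigOf fun ω => X B' ω - X B ω) (sigOf (X B)) := by
  refine ⟨fun hSM B hB B' hB' hBB' => ?_, fun h A hA B hB =>
    h B hB (A ∪ B) (union_mem_Au hA hB) subset_union_right⟩
  obtain ⟨s, hs, -, rfl⟩ := id hB'
  have hind := hSM.condIndepGiven_union_sUnion h𝒜 hmeas hadd hs hB
  rw [union_eq_right.2 hBB'] at hind
  exact (hind.sup_right (filt_le hmeas) (sigOf_le (hmeas _ hB')) (sigOf_le (hmeas B hB))).mono_right
    (sigOf_sub_le_sup _ _)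

/-- Comment 3: `X` is set-Markov iff for all `B ⊆ B'` in `𝒜(u)`,
`ℱ_B ⟂ σ(X_{B'∖B}) | σ(X_B)`, where `X_{B'∖B} := X_{B'} - X_B`. -/
theorem statement4 {T : Type*} [TopologicalSpace T] [CompactSpace T] [T2Space T]
    {Ω : Type*} [mΩ : MeasurableSpace Ω] (P : Measure Ω) [IsProbabilityMeasure P]
    (𝒜 : Set (Set T)) (h𝒜 : IsIndexing 𝒜)
    (X : Set T → Ω → ℝ) (hmeas : MeasOnAu 𝒜 X) (hadd : AddExtension 𝒜 P X) :
    SetMarkov 𝒜 P X ↔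
      ∀ B ∈ Au 𝒜, ∀ B' ∈ Au 𝒜, B ⊆ B' →
        CondIndepGiven P (filt 𝒜 X B)
          (sigOf fun ω => X B' ω - X B ω) (sigOf (X B)) :=
  statement4_general (mΩ := mΩ) P 𝒜 h𝒜 X hmeas hadd

end SetIndexedMarkov
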